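/- Let (B, m, Δ) be a connected bialgebra and λ ∈ B* with λ(1_B) = 1. There exists a unique coalgebra morphism Φ_λ : (B, Δ) → (K[X], Δ) with ε_δ ∘ Φ_λ = λ (where ε_δ(P) = P(1)), given by Φ_λ(x) = Σ_{k≥1} λ^{⊗k}(Δ̃^{(k-1)}(x)) H_k(X) for x ∈ B_+, where H_k(X) = X(X-1)⋯(X-k+1)/k!. Moreover Φ_λ is a bialgebra morphism if and only if λ is a character of B. -/

import Mathlib

/-!
A polynomial is determined by its values at the natural numbers. Since `Δ P = P(X + Y)`, a
coalgebra morphism `Φ` with `ε_δ ∘ Φ = λ` satisfies `ev_{m+n} ∘ Φ = (ev_m ∘ Φ) * (ev_n ∘ Φ)` in the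
convolution algebra `B*`, so `ev_n ∘ Φ = λ^{*n}`; this gives uniqueness, and conversely any `Φ`
with `ev_n ∘ Φ = λ^{*n}` for all `n` is a coalgebra morphism. For existence write `λ = ε + μ` with
`μ(1) = 0`: then `μ^{*k}` vanishes on the `n`-th step of the coradical filtration for `k > n`, so
`Φ(x) = Σ_k μ^{*k}(x) H_k` is a finite sum, and `H_k(n) = C(n, k)` together with the binomial
theorem gives `ev_n ∘ Φ = (ε + μ)^{*n}`. Finally `Φ` is multiplicative iff every `λ^{*n}` is,
i.e. iff `λ` is a character, as convolution powers of characters are characters.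
-/

open TensorProduct

section Coradical

variable (K B : Type*) [Field K] [Ring B] [Bialgebra K B]

/-- the reduced coproduct `Δ̃(x) = Δ(x) - x ⊗ 1 - 1 ⊗ x` -/
noncomputable def redCoprod : B →ₗ[K] B ⊗[K] B :=
  Coalgebra.comul (R := K) (A := B)
    - (TensorProduct.mk K B B).flip 1 - TensorProduct.mk K B B 1

/-- the coradical filtration of a bialgebra: `B_{≤0} = K·1` and
`B_{≤n+1} = K·1 ⊕ {x ∈ B_+ ∣ Δ̃(x) ∈ Ker(Δ̃^{(n)}) ⊗ B}`, so that
`B_{≤n} = K·1 ⊕ Ker(Δ̃^{(n)} : B_+ → B_+^{⊗ (n+1)})`. -/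
noncomputable def corad : ℕ → Submodule K B
  | 0 => K ∙ (1 : B)
  | n + 1 => (K ∙ (1 : B)) ⊔
      (LinearMap.ker (Coalgebra.counit (R := K) (A := B)) ⊓
        Submodule.comap (redCoprod K B)
          (LinearMap.range (TensorProduct.map
            ((corad n ⊓ LinearMap.ker (Coalgebra.counit (R := K) (A := B))).subtype)
            (LinearMap.id (R := K) (M := B)))))

/-- the bialgebra `B` is connected: the reduced coproduct is locally nilpotent,
i.e. the coradical filtration is exhaustive. -/
def IsConnectedBialgebra : Prop := ∀ x : B, ∃ n : ℕ, x ∈ corad K B n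

end Coradical

section PolyBialgebra

variable (K : Type*) [Field K]

/-- the coproduct `Δ` on `K[X]` with `Δ(P)(X ⊗ 1, 1 ⊗ X) = P(X + Y)`,
i.e. the algebra map sending `X` to `X ⊗ 1 + 1 ⊗ X` -/
noncomputable def polyComul : Polynomial K →ₗ[K] Polynomial K ⊗[K] Polynomial K :=
  (Polynomial.aeval ((Polynomial.X : Polynomial K) ⊗ₜ[K] 1
    + 1 ⊗ₜ[K] (Polynomial.X : Polynomial K))).toLinearMap

/-- evaluation of polynomials at `a ∈ K`, as a linear form on `K[X]`;
`evalAt 0` is the counit `ε_Δ` and `evalAt 1` is the counit `ε_δ` of `K[X]`. -/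
noncomputable def evalAt (a : K) : Polynomial K →ₗ[K] K :=
  (Polynomial.aeval a).toLinearMap

/-- the `k`-th Hilbert polynomial `H_k(X) = X(X-1)⋯(X-k+1)/k!` -/
noncomputable def hilbert (k : ℕ) : Polynomial K :=
  (k.factorial : K)⁻¹ • ∏ i ∈ Finset.range k, (Polynomial.X - Polynomial.C (i : K))

end PolyBialgebra

section

variable {K B : Type*} [Field K] [CharZero K] [Ring B] [Bialgebra K B]

/-- convolution product on `B*` induced by `Δ` -/
noncomputable def fconvΔ (f g : B →ₗ[K] K) : B →ₗ[K] K :=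
  LinearMap.mul' K K ∘ₗ TensorProduct.map f g ∘ₗ Coalgebra.comul (R := K) (A := B)

/-- convolution powers `λ^{*k}` in `B*` (with `λ^{*0} = ε_Δ`) -/
noncomputable def fpow (l : B →ₗ[K] K) : ℕ → (B →ₗ[K] K)
  | 0 => Coalgebra.counit (R := K) (A := B)
  | n + 1 => fconvΔ l (fpow l n)

/-- `Φ : B → K[X]` is a coalgebra morphism to `(K[X], Δ)` with counit `evalAt 0`. -/
def IsPolyCoalgMor (Φ : B →ₗ[K] Polynomial K) : Prop :=
  polyComul K ∘ₗ Φ = TensorProduct.map Φ Φ ∘ₗ Coalgebra.comul (R := K) (A := B)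
  ∧ evalAt K 0 ∘ₗ Φ = Coalgebra.counit (R := K) (A := B)

end

open WithConv Polynomial

section Convolution

variable {R B : Type*} [CommSemiring R] [Semiring B] [Bialgebra R B]

lemma LinearMap.convMul_apply_one {A : Type*} [Semiring A] [Algebra R A]
    (f g : WithConv (B →ₗ[R] A)) : (f * g) 1 = f 1 * g 1 := by
  simp [Bialgebra.comul_one, Algebra.TensorProduct.one_def]

lemma LinearMap.convPow_apply_one {A : Type*} [Semiring A] [Algebra R A]
    (f : WithConv (B →ₗ[R] A)) (n : ℕ) : (f ^ n) 1 = f 1 ^ n := by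
  induction n with
  | zero => simp
  | succ n ih => rw [pow_succ, convMul_apply_one, ih, pow_succ]

lemma LinearMap.toConv_counit : toConv (Coalgebra.counit : B →ₗ[R] R) = 1 := by
  ext x; simp

lemma LinearMap.convPow_apply_mul {A : Type*} [CommSemiring A] [Algebra R A] (f : B →ₗ[R] A)
    (h1 : f 1 = 1) (hmul : ∀ a b, f (a * b) = f a * f b) (n : ℕ) (a b : B) :
    (toConv f ^ n) (a * b) = (toConv f ^ n) a * (toConv f ^ n) b := by
  have h := AlgHom.toLinearMap_convPow (toConv (AlgHom.ofLinearMap f h1 hmul)) n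
  rw [ofConv_toConv, AlgHom.toLinearMap_ofLinearMap] at h
  rw [← h]
  exact map_mul (toConv (AlgHom.ofLinearMap f h1 hmul) ^ n).ofConv a b

end Convolution

section

variable {K B : Type*} [Field K] [Ring B] [Bialgebra K B]

lemma fpow_eq_convPow (l : B →ₗ[K] K) (n : ℕ) : fpow l n = (toConv l ^ n).ofConv := by
  induction n with
  | zero => rw [pow_zero, ← LinearMap.toConv_counit]; rfl
  | succ n ih => rw [pow_succ', fpow, ih]; rfl

lemma comul_eq_redCoprod_add (x : B) :
    Coalgebra.comul x = redCoprod K B x + x ⊗ₜ[K] 1 + 1 ⊗ₜ[K] x := by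
  simp only [redCoprod, LinearMap.sub_apply, LinearMap.flip_apply, TensorProduct.mk_apply]
  abel

lemma convPow_apply_eq_zero_of_mem_span_one {μ : WithConv (B →ₗ[K] K)} (hμ : μ 1 = 0)
    {k : ℕ} (hk : k ≠ 0) {x : B} (hx : x ∈ K ∙ (1 : B)) : (μ ^ k) x = 0 := by
  obtain ⟨c, rfl⟩ := Submodule.mem_span_singleton.1 hx
  rw [map_smul, LinearMap.convPow_apply_one, hμ, zero_pow hk, smul_zero]

lemma convPow_apply_eq_zero_of_mem_corad {μ : WithConv (B →ₗ[K] K)} (hμ : μ 1 = 0) {n : ℕ} :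
    ∀ {k : ℕ}, n < k → ∀ {x : B}, x ∈ corad K B n → (μ ^ k) x = 0 := by
  induction n with
  | zero => exact fun hk _ hx => convPow_apply_eq_zero_of_mem_span_one hμ hk.ne' hx
  | succ n ih =>
    intro k hk x hx
    obtain ⟨u, hu, v, ⟨-, w, hw⟩, rfl⟩ := Submodule.mem_sup.1 hx
    obtain ⟨j, rfl⟩ : ∃ j, k = j + 1 := ⟨k - 1, by omega⟩
    have hj : (μ ^ j).ofConv ∘ₗ (corad K B n ⊓ LinearMap.ker Coalgebra.counit).subtype = 0 := by
      ext ⟨s, hs, -⟩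
      exact ih (by omega) hs
    rw [map_add, convPow_apply_eq_zero_of_mem_span_one hμ (by omega) hu, zero_add, pow_succ,
      LinearMap.convMul_apply, comul_eq_redCoprod_add, ← hw]
    simp [← LinearMap.comp_apply, ← TensorProduct.map_comp, hj, hμ, LinearMap.convPow_apply_one,
      zero_pow (by omega : j ≠ 0)]

def ConvLocallyNilpotent (μ : WithConv (B →ₗ[K] K)) : Prop :=
  ∀ x : B, ∃ n : ℕ, ∀ k, n < k → (μ ^ k) x = 0

lemma IsConnectedBialgebra.convLocallyNilpotent (hB : IsConnectedBialgebra K B)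
    {μ : WithConv (B →ₗ[K] K)} (hμ : μ 1 = 0) : ConvLocallyNilpotent μ := fun x =>
  (hB x).imp fun _ hn _ hk => convPow_apply_eq_zero_of_mem_corad hμ hk hn

end

section PolynomialEvaluation

variable {K : Type*} [Field K]

lemma evalAt_apply (a : K) (p : K[X]) : evalAt K a p = p.eval a := by
  simp [evalAt]

lemma hilbert_eval_natCast [CharZero K] (k n : ℕ) : (hilbert K k).eval (n : K) = n.choose k := by
  have hprod : ∏ i ∈ Finset.range k, (X - C (i : K)) = descPochhammer K k := by
    induction k with
    | zero => simp
    | succ k ih => rw [Finset.prod_range_succ, ih, descPochhammer_succ_right, C_eq_natCast]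
  rw [hilbert, hprod, eval_smul, descPochhammer_eval_eq_descFactorial,
    Nat.descFactorial_eq_factorial_mul_choose, Nat.cast_mul, smul_eq_mul,
    inv_mul_cancel_left₀ (by exact_mod_cast k.factorial_ne_zero)]

lemma Polynomial.eq_of_eval_natCast_eq {R : Type*} [CommRing R] [IsDomain R] [CharZero R]
    {p q : R[X]} (h : ∀ n : ℕ, p.eval (n : R) = q.eval (n : R)) : p = q :=
  eq_of_infinite_eval_eq p q <| (Set.infinite_range_of_injective Nat.cast_injective).mono <| by
    rintro _ ⟨n, rfl⟩
    exact h n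

noncomputable def evalAt₂ (a b : K) : K[X] ⊗[K] K[X] →ₐ[K] K :=
  Algebra.TensorProduct.lift (aeval a) (aeval b) fun _ _ => .all _ _

lemma evalAt₂_toLinearMap (a b : K) :
    (evalAt₂ a b).toLinearMap = LinearMap.mul' K K ∘ₗ TensorProduct.map (evalAt K a) (evalAt K b) :=
  TensorProduct.ext' fun p q => by simp [evalAt₂, evalAt]

lemma evalAt₂_comp_polyComul (a b : K) :
    (evalAt₂ a b).toLinearMap ∘ₗ polyComul K = evalAt K (a + b) := by
  suffices (evalAt₂ a b).comp (aeval (X ⊗ₜ[K] 1 + 1 ⊗ₜ[K] X)) = aeval (a + b) from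
    congrArg AlgHom.toLinearMap this
  ext
  simp [evalAt₂]

lemma evalAt₂_polyEquivTensor (a b : K) (q : K[X][X]) :
    evalAt₂ a b (polyEquivTensor K K[X] q) = (q.eval (C b)).eval a := by
  suffices (evalAt₂ a b).comp (polyEquivTensor K K[X]).toAlgHom
      = (aeval a).comp ((aeval (C b)).restrictScalars K) by
    simpa [coe_aeval_eq_eval] using DFunLike.congr_fun this q
  ext <;> simp [evalAt₂]

lemma TensorProduct.eq_of_evalAt₂_natCast_eq [CharZero K] {z w : K[X] ⊗[K] K[X]}
    (h : ∀ m n : ℕ, evalAt₂ (m : K) n z = evalAt₂ (m : K) n w) : z = w := by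
  obtain ⟨q, rfl⟩ := (polyEquivTensor K K[X]).surjective z
  obtain ⟨r, rfl⟩ := (polyEquivTensor K K[X]).surjective w
  simp only [evalAt₂_polyEquivTensor] at h
  congr 1
  refine eq_of_infinite_eval_eq q r <|
    (Set.infinite_range_of_injective (C_injective.comp Nat.cast_injective)).mono ?_
  rintro _ ⟨n, rfl⟩
  exact eq_of_eval_natCast_eq fun m => h m n

end PolynomialEvaluation

section CoalgebraMorphisms

variable {K B : Type*} [Field K] [Ring B] [Bialgebra K B]

lemma evalAt₂_comp_map_comp_comul (Φ : B →ₗ[K] K[X]) (a b : K) :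
    (evalAt₂ a b).toLinearMap ∘ₗ TensorProduct.map Φ Φ ∘ₗ Coalgebra.comul =
      (toConv (evalAt K a ∘ₗ Φ) * toConv (evalAt K b ∘ₗ Φ)).ofConv := by
  ext x
  simp only [evalAt₂_toLinearMap, LinearMap.comp_apply, TensorProduct.map_map]
  rfl

lemma isPolyCoalgMor_and_evalAt_one_comp_iff [CharZero K] (Φ : B →ₗ[K] K[X]) (l : B →ₗ[K] K) :
    IsPolyCoalgMor Φ ∧ evalAt K 1 ∘ₗ Φ = l ↔
      ∀ n : ℕ, evalAt K n ∘ₗ Φ = (toConv l ^ n).ofConv := by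
  have hadd (a b : K) : (evalAt₂ a b).toLinearMap ∘ₗ polyComul K ∘ₗ Φ = evalAt K (a + b) ∘ₗ Φ := by
    rw [← LinearMap.comp_assoc, evalAt₂_comp_polyComul]
  constructor
  · rintro ⟨⟨hcomul, hcounit⟩, rfl⟩ n
    induction n with
    | zero => rw [Nat.cast_zero, hcounit, pow_zero, ← LinearMap.toConv_counit]
    | succ n ih =>
      rw [Nat.cast_succ, ← hadd, hcomul, evalAt₂_comp_map_comp_comul, ih, pow_succ]
  · intro h
    refine ⟨⟨?_, by simpa [← LinearMap.toConv_counit] using h 0⟩, by simpa using h 1⟩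
    ext x
    refine TensorProduct.eq_of_evalAt₂_natCast_eq fun m n => ?_
    have hmn : evalAt K (m + n : ℕ) ∘ₗ Φ =
        (toConv (evalAt K m ∘ₗ Φ) * toConv (evalAt K n ∘ₗ Φ)).ofConv := by
      rw [h, h, h, pow_add]
    rw [Nat.cast_add, ← hadd, ← evalAt₂_comp_map_comp_comul] at hmn
    exact congr($hmn x)

lemma LinearMap.ext_evalAt_natCast [CharZero K] {M : Type*} [AddCommMonoid M] [Module K M]
    {Φ Ψ : M →ₗ[K] K[X]} (h : ∀ n : ℕ, evalAt K n ∘ₗ Φ = evalAt K n ∘ₗ Ψ) : Φ = Ψ :=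
  LinearMap.ext fun x => eq_of_eval_natCast_eq fun n => by
    simpa [evalAt_apply] using congr($(h n) x)

end CoalgebraMorphisms

section HilbertSeries

variable {K B : Type*} [Field K] [Ring B] [Bialgebra K B]

lemma add_one_convPow_apply (μ : WithConv (B →ₗ[K] K)) (n : ℕ) (x : B) :
    ((μ + 1) ^ n) x = ∑ k ∈ Finset.range (n + 1), (μ ^ k) x * n.choose k := by
  rw [(Commute.one_right μ).add_pow, ofConv_sum, LinearMap.sum_apply]
  refine Finset.sum_congr rfl fun k _ => ?_
  rw [one_pow, mul_one, ← nsmul_eq_mul', ← nsmul_eq_mul']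
  rfl

lemma finite_support_convPow_apply_smul {μ : WithConv (B →ₗ[K] K)}
    (hμ : ConvLocallyNilpotent μ) {M : Type*} [AddCommMonoid M] [Module K M]
    (v : ℕ → M) (x : B) : (Function.support fun k => (μ ^ k) x • v k).Finite := by
  obtain ⟨n, hn⟩ := hμ x
  refine (Set.finite_Iic n).subset fun k hk => ?_
  by_contra hkn
  exact hk (by simp only [hn k (not_le.1 hkn), zero_smul])

noncomputable def hilbertSeries (μ : WithConv (B →ₗ[K] K))
    (hμ : ConvLocallyNilpotent μ) : B →ₗ[K] K[X] where
  toFun x := ∑ᶠ k, (μ ^ k) x • hilbert K k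
  map_add' x y := by
    simp only [map_add, add_smul]
    exact finsum_add_distrib (finite_support_convPow_apply_smul hμ _ x)
      (finite_support_convPow_apply_smul hμ _ y)
  map_smul' c x := by
    simp only [map_smul, smul_eq_mul, ← smul_smul, RingHom.id_apply]
    exact (smul_finsum' c (finite_support_convPow_apply_smul hμ _ x)).symm

lemma hilbertSeries_apply (μ : WithConv (B →ₗ[K] K)) (hμ : ConvLocallyNilpotent μ)
    (x : B) : hilbertSeries μ hμ x = ∑ᶠ k, (μ ^ k) x • hilbert K k := rfl

lemma evalAt_natCast_comp_hilbertSeries [CharZero K] (μ : WithConv (B →ₗ[K] K))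
    (hμ : ConvLocallyNilpotent μ) (n : ℕ) :
    evalAt K n ∘ₗ hilbertSeries μ hμ = ((μ + 1) ^ n).ofConv := by
  ext x
  rw [LinearMap.comp_apply, hilbertSeries_apply,
    map_finsum _ (finite_support_convPow_apply_smul hμ _ x)]
  simp only [map_smul, evalAt_apply, hilbert_eval_natCast,
    smul_eq_mul, add_one_convPow_apply]
  refine finsum_eq_sum_of_support_subset _ fun k hk => ?_
  by_contra hkn
  simp_all [Nat.choose_eq_zero_of_lt]

end HilbertSeries

section

variable {K B : Type*} [Field K] [CharZero K] [Ring B] [Bialgebra K B]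

lemma map_mul_iff_of_evalAt_natCast_comp {Φ : B →ₗ[K] K[X]} {l : B →ₗ[K] K}
    (hΦ : ∀ n : ℕ, evalAt K n ∘ₗ Φ = (toConv l ^ n).ofConv) (hl : l 1 = 1) :
    (Φ 1 = 1 ∧ ∀ a b : B, Φ (a * b) = Φ a * Φ b) ↔ ∀ a b : B, l (a * b) = l a * l b := by
  have heval (n : ℕ) (x : B) : (Φ x).eval (n : K) = (toConv l ^ n) x := by
    rw [← evalAt_apply, ← LinearMap.comp_apply, hΦ]
  have heval_one (x : B) : (Φ x).eval 1 = l x := by simpa using heval 1 x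
  refine ⟨fun ⟨_, hmul⟩ a b => ?_, fun hmul => ⟨?_, fun a b => ?_⟩⟩
  · rw [← heval_one, hmul, eval_mul, heval_one, heval_one]
  · exact eq_of_eval_natCast_eq fun n => by
      rw [heval, LinearMap.convPow_apply_one, hl, one_pow, eval_one]
  · exact eq_of_eval_natCast_eq fun n => by
      rw [heval, eval_mul, heval, heval, LinearMap.convPow_apply_mul l hl hmul]

/-- Let `B` be a connected bialgebra and `λ ∈ B*` with `λ(1) = 1`. There is a unique
coalgebra morphism `Φ_λ : B → K[X]` with `ε_δ ∘ Φ_λ = λ` (where `ε_δ = evalAt 1`);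
it is given on `B_+` by `Φ_λ(x) = Σ_{k≥1} (λ - ε_Δ)^{*k}(x) H_k(X)`
(which equals `Σ_{k≥1} λ^{⊗k}(Δ̃^{(k-1)}(x)) H_k(X)`); and `Φ_λ` is a bialgebra
morphism if and only if `λ` is a character. -/
theorem coalg_morphism_to_polynomials (hconn : IsConnectedBialgebra K B)
    (l : B →ₗ[K] K) (hl : l 1 = 1) :
    (∃! Φ : B →ₗ[K] Polynomial K, IsPolyCoalgMor Φ ∧ evalAt K 1 ∘ₗ Φ = l)
    ∧ ∀ Φ : B →ₗ[K] Polynomial K, IsPolyCoalgMor Φ → evalAt K 1 ∘ₗ Φ = l →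
        ((∀ x ∈ LinearMap.ker (Coalgebra.counit (R := K) (A := B)),
            Φ x = ∑ᶠ k : ℕ,
              fpow (l - Coalgebra.counit (R := K) (A := B)) k x • hilbert K k)
          ∧ ((Φ 1 = 1 ∧ ∀ a b : B, Φ (a * b) = Φ a * Φ b)
              ↔ (∀ a b : B, l (a * b) = l a * l b))) := by
  set μ := toConv (l - Coalgebra.counit (R := K) (A := B))
  have hμ : μ + 1 = toConv l := by simp [μ, LinearMap.toConv_counit]
  have hnil : ConvLocallyNilpotent μ := hconn.convLocallyNilpotent (by simp [μ, hl])
  have hΦ₀ := evalAt_natCast_comp_hilbertSeries μ hnil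
  rw [hμ] at hΦ₀
  have huniq : ∀ Φ, IsPolyCoalgMor Φ ∧ evalAt K 1 ∘ₗ Φ = l → Φ = hilbertSeries μ hnil :=
    fun Φ hΦ => LinearMap.ext_evalAt_natCast fun n => by
      rw [(isPolyCoalgMor_and_evalAt_one_comp_iff Φ l).1 hΦ, hΦ₀]
  refine ⟨⟨_, (isPolyCoalgMor_and_evalAt_one_comp_iff _ l).2 hΦ₀, huniq⟩, fun Φ hΦ hΦl => ?_⟩
  obtain rfl := huniq Φ ⟨hΦ, hΦl⟩
  exact ⟨fun x _ => by simp [hilbertSeries_apply, fpow_eq_convPow, μ],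
    map_mul_iff_of_evalAt_natCast_comp hΦ₀ hl⟩

end
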